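/- For any pairs a, b and p, q of distinct incident lines, the intersection (a ∇ b) ∩ (p Y q) is not a singleton: if it contains a line l, then it contains a line n ≠ l. -/
import Mathlib


/-!
Axiomatic projective space with lines as primary elements (Robinson,
"Projective space: lines and duality").

`perp I S` is `S^♢`, the set of lines incident to every line of `S`;
`lineSig I a b` is `Σ(a,b) = {a,b}^♢ \ {a,b}^♢♢`, the lines that belong to a
skew pair in `[a b]`.
-/

namespace PSLD

variable {L : Type*}

/-- `S^♢`: the lines incident to every member of `S`. -/
def perp (I : L → L → Prop) (S : Set L) : Set L := {l | ∀ s ∈ S, I l s}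

/-- `Σ(a,b) = {a,b}^♢ \ {a,b}^♢♢`. -/
def lineSig (I : L → L → Prop) (a b : L) : Set L :=
  perp I {a, b} \ perp I (perp I {a, b})

/-- A triad: pairwise incident distinct lines `a, b, c` with `c ∈ Σ(a,b)`. -/
def Triad (I : L → L → Prop) (a b c : L) : Prop :=
  a ≠ b ∧ I a b ∧ c ∈ lineSig I a b

/-- A nonempty type of lines with a reflexive symmetric incidence relation
satisfying AXIOM [1], AXIOM [2.1], AXIOM [2.2], AXIOM [2.3]. -/
structure LineGeom (L : Type*) where
  /-- incidence -/
  I : L → L → Prop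
  nonempty : Nonempty L
  refl : ∀ l, I l l
  symm : ∀ a b, I a b → I b a
  /-- AXIOM [1]: each `l^♢` contains a pairwise skew triple. -/
  ax1 : ∀ l : L, ∃ x y z : L, I x l ∧ I y l ∧ I z l ∧ ¬ I x y ∧ ¬ I y z ∧ ¬ I x z
  /-- AXIOM [2.1]: for distinct incident `a, b`, `[a b]` contains a skew pair. -/
  ax21 : ∀ a b : L, a ≠ b → I a b →
    ∃ x ∈ perp I {a, b}, ∃ y ∈ perp I {a, b}, ¬ I x y
  /-- AXIOM [2.2]: for distinct incident `a, b` and `z ∈ Σ(a,b)`,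
  `[a b z]` contains no skew pair. -/
  ax22 : ∀ a b z : L, a ≠ b → I a b → z ∈ lineSig I a b →
    ∀ x ∈ perp I {a, b, z}, ∀ y ∈ perp I {a, b, z}, I x y
  /-- AXIOM [2.3]: for distinct incident `a, b` and a skew pair `x, y ∈ [a b]`,
  every line of `[a b]` is incident to `x` or to `y`. -/
  ax23 : ∀ a b x y : L, a ≠ b → I a b → x ∈ perp I {a, b} → y ∈ perp I {a, b} →
    ¬ I x y → ∀ l ∈ perp I {a, b}, I l x ∨ I l y

/-- A `LineGeom` together with a symmetric labelling `Σ_Y`, `Σ_∇` of the two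
incidence classes of each `Σ(a,b)`, the derived points `pt a b = a Y b` and
planes `pl a b = a ∇ b`, and AXIOM [3], AXIOM [4]. -/
structure LabeledLineGeom (L : Type*) extends LineGeom L where
  /-- the incidence class `Σ_Y(a,b)` -/
  SY : L → L → Set L
  /-- the incidence class `Σ_∇(a,b)` -/
  SD : L → L → Set L
  SY_symm : ∀ a b : L, SY a b = SY b a
  SD_symm : ∀ a b : L, SD a b = SD b a
  SY_union_SD : ∀ a b : L, a ≠ b → I a b → SY a b ∪ SD a b = lineSig I a b
  SY_disj_SD : ∀ a b : L, a ≠ b → I a b → SY a b ∩ SD a b = ∅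
  SY_nonempty : ∀ a b : L, a ≠ b → I a b → (SY a b).Nonempty
  SD_nonempty : ∀ a b : L, a ≠ b → I a b → (SD a b).Nonempty
  SY_incident : ∀ a b : L, a ≠ b → I a b → ∀ x ∈ SY a b, ∀ y ∈ SY a b, I x y
  SD_incident : ∀ a b : L, a ≠ b → I a b → ∀ x ∈ SD a b, ∀ y ∈ SD a b, I x y
  SY_skew_SD : ∀ a b : L, a ≠ b → I a b → ∀ x ∈ SY a b, ∀ y ∈ SD a b, ¬ I x y
  /-- the point `a Y b` -/
  pt : L → L → Set L
  /-- the plane `a ∇ b` -/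
  pl : L → L → Set L
  /-- `a Y b = [a b c]` for any `c ∈ Σ_Y(a,b)` (well-defined). -/
  pt_spec : ∀ a b c : L, a ≠ b → I a b → c ∈ SY a b → pt a b = perp I {a, b, c}
  /-- `a ∇ b = [a b c]` for any `c ∈ Σ_∇(a,b)` (well-defined). -/
  pl_spec : ∀ a b c : L, a ≠ b → I a b → c ∈ SD a b → pl a b = perp I {a, b, c}
  /-- AXIOM [3]: each triad admits a triad with disjoint perp. -/
  ax3 : ∀ a b c : L, Triad I a b c → ∃ p q r : L, Triad I p q r ∧
    perp I {a, b, c} ∩ perp I {p, q, r} = ∅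
  /-- AXIOM [4]: any two points meet; any two planes meet. -/
  ax4 : ∀ a b p q : L, a ≠ b → I a b → p ≠ q → I p q →
    (pt a b ∩ pt p q).Nonempty ∧ (pl a b ∩ pl p q).Nonempty

/-- `P` is a point: `P = a Y b` for some distinct incident lines `a, b`. -/
def IsPoint (G : LabeledLineGeom L) (P : Set L) : Prop :=
  ∃ a b : L, a ≠ b ∧ G.I a b ∧ P = G.pt a b

/-- `π` is a plane: `π = a ∇ b` for some distinct incident lines `a, b`. -/
def IsPlane (G : LabeledLineGeom L) (π : Set L) : Prop :=
  ∃ a b : L, a ≠ b ∧ G.I a b ∧ π = G.pl a b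


/-! ### Auxiliary lemmas for Theorem 13 -/

section Aux

variable (G : LabeledLineGeom L)

lemma mem_perp_pair {I : L → L → Prop} {a b x : L} :
    x ∈ perp I {a, b} ↔ I x a ∧ I x b := by simp [perp]

lemma mem_perp_triple {I : L → L → Prop} {a b c x : L} :
    x ∈ perp I {a, b, c} ↔ I x a ∧ I x b ∧ I x c := by simp [perp]

/-- Any member of `S` lies in `S^♢♢`. -/
lemma self_mem_pp {S : Set L} {x : L} (hx : x ∈ S) :
    x ∈ perp G.I (perp G.I S) :=
  fun g hg => G.symm _ _ (hg x hx)

/-- Membership in `Σ(s,t)` splits into the two labelled classes. -/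
lemma sig_cases {s t x : L} (hst : s ≠ t) (h : G.I s t)
    (hx : x ∈ lineSig G.I s t) : x ∈ G.SY s t ∨ x ∈ G.SD s t := by
  rw [← G.SY_union_SD s t hst h] at hx; exact hx

lemma SY_sub_sig {s t x : L} (hst : s ≠ t) (h : G.I s t)
    (hx : x ∈ G.SY s t) : x ∈ lineSig G.I s t := by
  rw [← G.SY_union_SD s t hst h]; exact Or.inl hx

lemma SD_sub_sig {s t x : L} (hst : s ≠ t) (h : G.I s t)
    (hx : x ∈ G.SD s t) : x ∈ lineSig G.I s t := by
  rw [← G.SY_union_SD s t hst h]; exact Or.inr hx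

/-- A line of `Σ(s,t)` incident to a line of `Σ_Y(s,t)` is itself in `Σ_Y(s,t)`. -/
lemma same_class_SY {s t n x : L} (hst : s ≠ t) (h : G.I s t)
    (hn : n ∈ lineSig G.I s t) (hx : x ∈ G.SY s t) (hnx : G.I n x) :
    n ∈ G.SY s t := by
  rcases sig_cases G hst h hn with h' | h'
  · exact h'
  · exact absurd (G.symm _ _ hnx) (G.SY_skew_SD s t hst h x hx n h')

lemma same_class_SD {s t n x : L} (hst : s ≠ t) (h : G.I s t)
    (hn : n ∈ lineSig G.I s t) (hx : x ∈ G.SD s t) (hnx : G.I n x) :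
    n ∈ G.SD s t := by
  rcases sig_cases G hst h hn with h' | h'
  · exact absurd hnx (G.SY_skew_SD s t hst h n h' x hx)
  · exact h'

/-- A line of `[s t]` incident to lines of both classes lies in `{s,t}^♢♢`. -/
lemma mem_pp_of_both {s t n y d : L} (hst : s ≠ t) (h : G.I s t)
    (hn : n ∈ perp G.I {s, t}) (hy : y ∈ G.SY s t) (hd : d ∈ G.SD s t)
    (hny : G.I n y) (hnd : G.I n d) :
    n ∈ perp G.I (perp G.I {s, t}) := by
  by_cases hpp : n ∈ perp G.I (perp G.I {s, t})
  · exact hpp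
  · have hnS : n ∈ lineSig G.I s t := ⟨hn, hpp⟩
    rcases sig_cases G hst h hnS with h' | h'
    · exact absurd hnd (G.SY_skew_SD s t hst h n h' d hd)
    · exact absurd (G.symm _ _ hny) (G.SY_skew_SD s t hst h y hy n h')

/-- Key lemma: if `l ∈ {s,t}^♢♢`, `l ≠ s`, and `e ∈ Σ(s,t)`, then
`l ∉ {s,e}^♢♢`. -/
lemma not_mem_pp_pair {s t e l : L} (hst : s ≠ t) (h : G.I s t)
    (hl : l ∈ perp G.I (perp G.I {s, t})) (hls : l ≠ s)
    (he : e ∈ lineSig G.I s t) :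
    l ∉ perp G.I (perp G.I {s, e}) := by
  intro K
  have hes : e ∈ perp G.I {s, t} := he.1
  have hIes : G.I e s := (mem_perp_pair.mp hes).1
  have hse : s ≠ e := fun h' => he.2 (h' ▸ self_mem_pp G (by simp : s ∈ ({s, t} : Set L)))
  have hIse : G.I s e := G.symm _ _ hIes
  -- a witness in `[s t]` skew to `e`
  obtain ⟨w, hw, hwe⟩ : ∃ w ∈ perp G.I {s, t}, ¬ G.I e w := by
    rcases sig_cases G hst h he with heY | heD
    · obtain ⟨w, hw⟩ := G.SD_nonempty s t hst h
      exact ⟨w, (SD_sub_sig G hst h hw).1, G.SY_skew_SD s t hst h e heY w hw⟩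
    · obtain ⟨w, hw⟩ := G.SY_nonempty s t hst h
      exact ⟨w, (SY_sub_sig G hst h hw).1,
        fun hew => G.SY_skew_SD s t hst h w hw e heD (G.symm _ _ hew)⟩
  obtain ⟨y, hy⟩ := G.SY_nonempty s e hse hIse
  obtain ⟨d, hd⟩ := G.SD_nonempty s e hse hIse
  have hyd : ¬ G.I y d := G.SY_skew_SD s e hse hIse y hy d hd
  have hyp : y ∈ perp G.I {s, e} := (SY_sub_sig G hse hIse hy).1
  have hdp : d ∈ perp G.I {s, e} := (SD_sub_sig G hse hIse hd).1
  -- incidences with l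
  have hly : G.I l y := K y hyp
  have hld : G.I l d := K d hdp
  have hle : G.I l e := hl e hes
  have hlsI : G.I l s := hl s (mem_perp_pair.mpr ⟨G.refl s, h⟩)
  have hlw : G.I l w := hl w hw
  -- memberships in `[l s]`
  have hels : e ∈ perp G.I {l, s} := mem_perp_pair.mpr ⟨G.symm _ _ hle, hIes⟩
  have hyls : y ∈ perp G.I {l, s} := mem_perp_pair.mpr ⟨G.symm _ _ hly, (mem_perp_pair.mp hyp).1⟩
  have hdls : d ∈ perp G.I {l, s} := mem_perp_pair.mpr ⟨G.symm _ _ hld, (mem_perp_pair.mp hdp).1⟩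
  have hwls : w ∈ perp G.I {l, s} := mem_perp_pair.mpr ⟨G.symm _ _ hlw, (mem_perp_pair.mp hw).1⟩
  -- memberships in `Σ(l,s)`
  have heS : e ∈ lineSig G.I l s := ⟨hels, fun hpp => hwe (hpp w hwls)⟩
  have hyS : y ∈ lineSig G.I l s := ⟨hyls, fun hpp => hyd (hpp d hdls)⟩
  have hdS : d ∈ lineSig G.I l s := ⟨hdls, fun hpp => hyd (G.symm _ _ (hpp y hyls))⟩
  have hIye : G.I y e := (mem_perp_pair.mp hyp).2
  have hIde : G.I d e := (mem_perp_pair.mp hdp).2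
  rcases sig_cases G hls hlsI heS with heY | heD
  · have hyY := same_class_SY G hls hlsI hyS heY hIye
    have hdY := same_class_SY G hls hlsI hdS heY hIde
    exact hyd (G.SY_incident l s hls hlsI y hyY d hdY)
  · have hyD := same_class_SD G hls hlsI hyS heD hIye
    have hdD := same_class_SD G hls hlsI hdS heD hIde
    exact hyd (G.SD_incident l s hls hlsI y hyD d hdD)

lemma pl_comm {a b : L} (hab : a ≠ b) (h1 : G.I a b) : G.pl a b = G.pl b a := by
  obtain ⟨c, hc⟩ := G.SD_nonempty a b hab h1
  rw [G.pl_spec a b c hab h1 hc,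
    G.pl_spec b a c hab.symm (G.symm _ _ h1) (by rw [G.SD_symm]; exact hc),
    Set.insert_comm]

lemma pt_comm {p q : L} (hpq : p ≠ q) (h2 : G.I p q) : G.pt p q = G.pt q p := by
  obtain ⟨r, hr⟩ := G.SY_nonempty p q hpq h2
  rw [G.pt_spec p q r hpq h2 hr,
    G.pt_spec q p r hpq.symm (G.symm _ _ h2) (by rw [G.SY_symm]; exact hr),
    Set.insert_comm]

end Aux

/-- Theorem 13 under the extra assumptions `l ≠ a`, `l ≠ p`. -/
lemma core (G : LabeledLineGeom L) (a b p q l : L)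
    (hab : a ≠ b) (h1 : G.I a b) (hpq : p ≠ q) (h2 : G.I p q)
    (hla : l ≠ a) (hlp : l ≠ p) (hl : l ∈ G.pl a b ∩ G.pt p q) :
    ∃ n ∈ G.pl a b ∩ G.pt p q, n ≠ l := by
  obtain ⟨c, hc⟩ := G.SD_nonempty a b hab h1
  obtain ⟨r, hr⟩ := G.SY_nonempty p q hpq h2
  have hcS : c ∈ lineSig G.I a b := SD_sub_sig G hab h1 hc
  have hrS : r ∈ lineSig G.I p q := SY_sub_sig G hpq h2 hr
  have hplab : G.pl a b = perp G.I {a, b, c} := G.pl_spec a b c hab h1 hc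
  have hptpq : G.pt p q = perp G.I {p, q, r} := G.pt_spec p q r hpq h2 hr
  have hl1 : l ∈ perp G.I {a, b, c} := hplab ▸ hl.1
  have hl2 : l ∈ perp G.I {p, q, r} := hptpq ▸ hl.2
  obtain ⟨Ila, Ilb, Ilc⟩ := mem_perp_triple.mp hl1
  obtain ⟨Ilp, Ilq, Ilr⟩ := mem_perp_triple.mp hl2
  have hca : G.I c a := (mem_perp_pair.mp hcS.1).1
  have hcb : G.I c b := (mem_perp_pair.mp hcS.1).2
  have hrp : G.I r p := (mem_perp_pair.mp hrS.1).1
  have hrq : G.I r q := (mem_perp_pair.mp hrS.1).2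
  -- first split for the plane side
  have hcase1 : l ∈ G.SD a b ∨ l ∈ perp G.I (perp G.I {a, b}) := by
    by_cases hpp : l ∈ perp G.I (perp G.I {a, b})
    · exact Or.inr hpp
    · have hlS : l ∈ lineSig G.I a b := ⟨mem_perp_pair.mpr ⟨Ila, Ilb⟩, hpp⟩
      rcases sig_cases G hab h1 hlS with h' | h'
      · exact absurd Ilc (G.SY_skew_SD a b hab h1 l h' c hc)
      · exact Or.inl h'
  have hcase2 : l ∈ G.SY p q ∨ l ∈ perp G.I (perp G.I {p, q}) := by
    by_cases hpp : l ∈ perp G.I (perp G.I {p, q})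
    · exact Or.inr hpp
    · have hlS : l ∈ lineSig G.I p q := ⟨mem_perp_pair.mpr ⟨Ilp, Ilq⟩, hpp⟩
      rcases sig_cases G hpq h2 hlS with h' | h'
      · exact Or.inl h'
      · exact absurd Ilr (fun h'' =>
          G.SY_skew_SD p q hpq h2 r hr l h' (G.symm _ _ h''))
  rcases hcase1 with hlD | hppab
  · -- Case 1 : l ∈ Σ_∇(a,b); use the join of the points a Y b and p Y q
    obtain ⟨n, hn⟩ := (G.ax4 a b p q hab h1 hpq h2).1
    obtain ⟨r₀, hr₀⟩ := G.SY_nonempty a b hab h1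
    have hn1 : n ∈ perp G.I {a, b, r₀} := (G.pt_spec a b r₀ hab h1 hr₀) ▸ hn.1
    obtain ⟨Ina, Inb, Inr₀⟩ := mem_perp_triple.mp hn1
    have hne : n ≠ l := by
      intro h'
      exact G.SY_skew_SD a b hab h1 r₀ hr₀ l hlD (G.symm _ _ (h' ▸ Inr₀))
    have Inl : G.I n l :=
      G.ax22 p q r hpq h2 hrS n (hptpq ▸ hn.2) l hl2
    have hnpp := mem_pp_of_both G hab h1 (mem_perp_pair.mpr ⟨Ina, Inb⟩)
      hr₀ hlD Inr₀ Inl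
    have Inc : G.I n c := hnpp c hcS.1
    exact ⟨n, ⟨hplab ▸ mem_perp_triple.mpr ⟨Ina, Inb, Inc⟩, hn.2⟩, hne⟩
  rcases hcase2 with hlY | hpppq
  · -- Case 2 : l ∈ Σ_Y(p,q); use the meet of the planes a ∇ b and p ∇ q
    obtain ⟨n, hn⟩ := (G.ax4 a b p q hab h1 hpq h2).2
    obtain ⟨c₀, hc₀⟩ := G.SD_nonempty p q hpq h2
    have hn2 : n ∈ perp G.I {p, q, c₀} := (G.pl_spec p q c₀ hpq h2 hc₀) ▸ hn.2
    obtain ⟨Inp, Inq, Inc₀⟩ := mem_perp_triple.mp hn2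
    have hne : n ≠ l := by
      intro h'
      exact G.SY_skew_SD p q hpq h2 l hlY c₀ hc₀ (h' ▸ Inc₀)
    have Inl : G.I n l :=
      G.ax22 a b c hab h1 hcS n (hplab ▸ hn.1) l hl1
    have hnpp := mem_pp_of_both G hpq h2 (mem_perp_pair.mpr ⟨Inp, Inq⟩)
      hlY hc₀ Inl Inc₀
    have Inr : G.I n r := hnpp r hrS.1
    exact ⟨n, ⟨hn.1, hptpq ▸ mem_perp_triple.mpr ⟨Inp, Inq, Inr⟩⟩, hne⟩
  -- Case 3 : l ∈ {a,b}^♢♢ and l ∈ {p,q}^♢♢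
  have hA1 : l ∉ perp G.I (perp G.I {a, c}) :=
    not_mem_pp_pair G hab h1 hppab hla hcS
  have hA2 : l ∉ perp G.I (perp G.I {p, r}) :=
    not_mem_pp_pair G hpq h2 hpppq hlp hrS
  have hac : a ≠ c := fun h' => hcS.2 (h' ▸ self_mem_pp G (by simp : a ∈ ({a, b} : Set L)))
  have hpr : p ≠ r := fun h' => hrS.2 (h' ▸ self_mem_pp G (by simp : p ∈ ({p, q} : Set L)))
  have hIac : G.I a c := G.symm _ _ hca
  have hIpr : G.I p r := G.symm _ _ hrp
  have hlS1 : l ∈ lineSig G.I a c := ⟨mem_perp_pair.mpr ⟨Ila, Ilc⟩, hA1⟩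
  have hlS2 : l ∈ lineSig G.I p r := ⟨mem_perp_pair.mpr ⟨Ilp, Ilr⟩, hA2⟩
  have hbac : b ∈ perp G.I {a, c} := mem_perp_pair.mpr ⟨G.symm _ _ h1, G.symm _ _ hcb⟩
  have hqpr : q ∈ perp G.I {p, r} := mem_perp_pair.mpr ⟨G.symm _ _ h2, G.symm _ _ hrq⟩
  rcases sig_cases G hac hIac hlS1 with hlY1 | hlD1
  · rcases sig_cases G hpr hIpr hlS2 with hlY2 | hlD2
    · -- 3.2 : l ∈ Σ_Y(p,r); use the meet of the planes a ∇ b and p ∇ r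
      obtain ⟨z', hz'⟩ := G.SD_nonempty p r hpr hIpr
      obtain ⟨n, hn⟩ := (G.ax4 a b p r hab h1 hpr hIpr).2
      have hn2 : n ∈ perp G.I {p, r, z'} := (G.pl_spec p r z' hpr hIpr hz') ▸ hn.2
      obtain ⟨Inp, Inr, Inz'⟩ := mem_perp_triple.mp hn2
      have hne : n ≠ l := by
        intro h'
        exact G.SY_skew_SD p r hpr hIpr l hlY2 z' hz' (h' ▸ Inz')
      have Inl : G.I n l := G.ax22 a b c hab h1 hcS n (hplab ▸ hn.1) l hl1
      have hnpp := mem_pp_of_both G hpr hIpr (mem_perp_pair.mpr ⟨Inp, Inr⟩)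
        hlY2 hz' Inl Inz'
      have Inq : G.I n q := hnpp q hqpr
      exact ⟨n, ⟨hn.1, hptpq ▸ mem_perp_triple.mpr ⟨Inp, Inq, Inr⟩⟩, hne⟩
    · -- 3.3 : l ∈ Σ_Y(a,c) and l ∈ Σ_∇(p,r); join the points a Y c and p Y r
      obtain ⟨z', hz'⟩ := G.SY_nonempty p r hpr hIpr
      have hz'l : ¬ G.I z' l := G.SY_skew_SD p r hpr hIpr z' hz' l hlD2
      obtain ⟨n, hn⟩ := (G.ax4 a c p r hac hIac hpr hIpr).1
      have hn1 : n ∈ perp G.I {a, c, l} := (G.pt_spec a c l hac hIac hlY1) ▸ hn.1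
      have hn2 : n ∈ perp G.I {p, r, z'} := (G.pt_spec p r z' hpr hIpr hz') ▸ hn.2
      obtain ⟨Ina, Inc, Inl⟩ := mem_perp_triple.mp hn1
      obtain ⟨Inp, Inr, Inz'⟩ := mem_perp_triple.mp hn2
      have hne : n ≠ l := fun h' => hz'l (G.symm _ _ (h' ▸ Inz'))
      -- point side
      have hnpp2 := mem_pp_of_both G hpr hIpr (mem_perp_pair.mpr ⟨Inp, Inr⟩)
        hz' hlD2 Inz' Inl
      have Inq : G.I n q := hnpp2 q hqpr
      -- plane side
      have hnac : n ∈ perp G.I {a, c} := mem_perp_pair.mpr ⟨Ina, Inc⟩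
      have Inb : G.I n b := by
        by_cases hnpp0 : n ∈ perp G.I (perp G.I {a, c})
        · exact hnpp0 b hbac
        · have hnS : n ∈ lineSig G.I a c := ⟨hnac, hnpp0⟩
          have hnY : n ∈ G.SY a c := same_class_SY G hac hIac hnS hlY1 Inl
          by_cases hb : b ∈ perp G.I (perp G.I {a, c})
          · exact G.symm _ _ (hb n hnac)
          · have hbS : b ∈ lineSig G.I a c := ⟨hbac, hb⟩
            have hbY : b ∈ G.SY a c :=
              same_class_SY G hac hIac hbS hlY1 (G.symm _ _ Ilb)
            exact G.SY_incident a c hac hIac n hnY b hbY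
      exact ⟨n, ⟨hplab ▸ mem_perp_triple.mpr ⟨Ina, Inb, Inc⟩,
        hptpq ▸ mem_perp_triple.mpr ⟨Inp, Inq, Inr⟩⟩, hne⟩
  · -- 3.1 : l ∈ Σ_∇(a,c); join the points a Y c and p Y q
    obtain ⟨z, hz⟩ := G.SY_nonempty a c hac hIac
    have hzl : ¬ G.I z l := G.SY_skew_SD a c hac hIac z hz l hlD1
    obtain ⟨n, hn⟩ := (G.ax4 a c p q hac hIac hpq h2).1
    have hn1 : n ∈ perp G.I {a, c, z} := (G.pt_spec a c z hac hIac hz) ▸ hn.1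
    obtain ⟨Ina, Inc, Inz⟩ := mem_perp_triple.mp hn1
    have hne : n ≠ l := fun h' => hzl (G.symm _ _ (h' ▸ Inz))
    have Inl : G.I n l := G.ax22 p q r hpq h2 hrS n (hptpq ▸ hn.2) l hl2
    have hnpp := mem_pp_of_both G hac hIac (mem_perp_pair.mpr ⟨Ina, Inc⟩)
      hz hlD1 Inz Inl
    have Inb : G.I n b := hnpp b hbac
    exact ⟨n, ⟨hplab ▸ mem_perp_triple.mpr ⟨Ina, Inb, Inc⟩, hn.2⟩, hne⟩

/-- Theorem 13 (paper): `(a ∇ b) ∩ (p Y q)` is not a singleton: if it contains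
a line `l` then it contains a further line `n ≠ l`. -/
theorem plane_inter_point_not_singleton (G : LabeledLineGeom L) (a b p q : L)
    (hab : a ≠ b) (h1 : G.I a b) (hpq : p ≠ q) (h2 : G.I p q)
    (l : L) (hl : l ∈ G.pl a b ∩ G.pt p q) :
    ∃ n ∈ G.pl a b ∩ G.pt p q, n ≠ l := by
  have hpl : G.pl a b = G.pl b a := pl_comm G hab h1
  have hpt : G.pt p q = G.pt q p := pt_comm G hpq h2
  rcases ne_or_eq l a with hla | hla
  · rcases ne_or_eq l p with hlp | hlp
    · exact core G a b p q l hab h1 hpq h2 hla hlp hl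
    · have hlq : l ≠ q := hlp ▸ hpq
      have hl' : l ∈ G.pl a b ∩ G.pt q p := ⟨hl.1, hpt ▸ hl.2⟩
      obtain ⟨n, hn, hne⟩ :=
        core G a b q p l hab h1 hpq.symm (G.symm _ _ h2) hla hlq hl'
      exact ⟨n, ⟨hn.1, hpt ▸ hn.2⟩, hne⟩
  · have hlb : l ≠ b := hla ▸ hab
    rcases ne_or_eq l p with hlp | hlp
    · have hl' : l ∈ G.pl b a ∩ G.pt p q := ⟨hpl ▸ hl.1, hl.2⟩
      obtain ⟨n, hn, hne⟩ :=
        core G b a p q l hab.symm (G.symm _ _ h1) hpq h2 hlb hlp hl'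
      exact ⟨n, ⟨hpl ▸ hn.1, hn.2⟩, hne⟩
    · have hlq : l ≠ q := hlp ▸ hpq
      have hl' : l ∈ G.pl b a ∩ G.pt q p := ⟨hpl ▸ hl.1, hpt ▸ hl.2⟩
      obtain ⟨n, hn, hne⟩ :=
        core G b a q p l hab.symm (G.symm _ _ h1) hpq.symm (G.symm _ _ h2) hlb hlq hl'
      exact ⟨n, ⟨hpl ▸ hn.1, hpt ▸ hn.2⟩, hne⟩

end PSLD
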